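/- arXiv:1504.07035 — 3 statements merged into one kernel-verified Lean document; each statement's English description precedes it below -/
import Mathlib

section
/- Let μ be a Radon measure on ℝ^d, let D be the standard dyadic lattice of ℝ^d, and let {a_Q}_{Q∈D} be non-negative numbers such that for every R ∈ D one has ∑_{Q∈D : Q⊆R} a_Q ≤ c₃ μ(R). Then every family of non-negative numbers {γ_Q}_{Q∈D} satisfies ∑_{Q∈D} γ_Q a_Q ≤ c₃ ∫ sup_{Q∈D : Q∋x} γ_Q dμ(x). -/
open MeasureTheory Set ENNReal

noncomputable section

/-- The support of a measure on `ℝ^d`: points all of whose balls have positive measure. -/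
def msupport {d : ℕ} (μ : Measure (EuclideanSpace ℝ (Fin d))) : Set (EuclideanSpace ℝ (Fin d)) :=
  {x | ∀ r : ℝ, 0 < r → 0 < μ (Metric.ball x r)}

/-- `μ` is `n`-dimensional Ahlfors–David regular with constant `C`. -/
def IsADRegular {d : ℕ} (n : ℕ) (μ : Measure (EuclideanSpace ℝ (Fin d))) (C : ℝ) : Prop :=
  1 ≤ C ∧ ∀ x ∈ msupport μ, ∀ r : ℝ, 0 < r → ENNReal.ofReal r ≤ EMetric.diam (msupport μ) →
    ENNReal.ofReal (C⁻¹ * r ^ n) ≤ μ (Metric.closedBall x r) ∧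
      μ (Metric.closedBall x r) ≤ ENNReal.ofReal (C * r ^ n)

/-- `μ` is uniformly `n`-rectifiable, with AD-regularity constant `C` and parameters `θ`, `M`. -/
def IsUnifRectifiable {d : ℕ} (n : ℕ) (μ : Measure (EuclideanSpace ℝ (Fin d)))
    (C θ M : ℝ) : Prop :=
  IsADRegular n μ C ∧ 0 < θ ∧ 0 < M ∧
    ∀ x ∈ msupport μ, ∀ r : ℝ, 0 < r → ENNReal.ofReal r ≤ EMetric.diam (msupport μ) →
      ∃ g : EuclideanSpace ℝ (Fin n) → EuclideanSpace ℝ (Fin d),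
        LipschitzWith (Real.toNNReal M) g ∧
          ENNReal.ofReal (θ * r ^ n) ≤ μ (Metric.closedBall x r ∩ g '' Metric.closedBall 0 r)

/-- `K` is an odd `n`-dimensional Calderón–Zygmund kernel with constant `C`. -/
def IsCZKernel {d : ℕ} (n : ℕ) (K : EuclideanSpace ℝ (Fin d) → ℝ) (C : ℝ) : Prop :=
  0 < C ∧ ContDiffOn ℝ 2 K {(0 : EuclideanSpace ℝ (Fin d))}ᶜ ∧
    (∀ x : EuclideanSpace ℝ (Fin d), x ≠ 0 → K (-x) = -K x) ∧
    (∀ x : EuclideanSpace ℝ (Fin d), x ≠ 0 → |K x| ≤ C / ‖x‖ ^ n) ∧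
    (∀ x : EuclideanSpace ℝ (Fin d), x ≠ 0 → ‖fderiv ℝ K x‖ ≤ C / ‖x‖ ^ (n + 1)) ∧
    (∀ x : EuclideanSpace ℝ (Fin d), x ≠ 0 → ‖fderiv ℝ (fderiv ℝ K) x‖ ≤ C / ‖x‖ ^ (n + 2))

/-- The truncated singular integral `T_ε^μ f (x)`. -/
def Tmu {d : ℕ} (K : EuclideanSpace ℝ (Fin d) → ℝ) (μ : Measure (EuclideanSpace ℝ (Fin d)))
    (f : EuclideanSpace ℝ (Fin d) → ℝ) (ε : ℝ) (x : EuclideanSpace ℝ (Fin d)) : ℝ :=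
  ∫ y in {y | ε < dist x y}, K (x - y) * f y ∂μ

/-- The truncated singular integral `T_ε ν (x)` of a finite signed measure `ν`. -/
def Tnu {d : ℕ} (K : EuclideanSpace ℝ (Fin d) → ℝ)
    (ν : SignedMeasure (EuclideanSpace ℝ (Fin d))) (ε : ℝ) (x : EuclideanSpace ℝ (Fin d)) : ℝ :=
  (∫ y in {y | ε < dist x y}, K (x - y) ∂ν.toJordanDecomposition.posPart)
    - ∫ y in {y | ε < dist x y}, K (x - y) ∂ν.toJordanDecomposition.negPart

/-- The (untruncated) integral `∫ K(x-y) dν(y)` against a finite signed measure. -/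
def Tfull {d : ℕ} (K : EuclideanSpace ℝ (Fin d) → ℝ)
    (ν : SignedMeasure (EuclideanSpace ℝ (Fin d))) (x : EuclideanSpace ℝ (Fin d)) : ℝ :=
  (∫ y, K (x - y) ∂ν.toJordanDecomposition.posPart)
    - ∫ y, K (x - y) ∂ν.toJordanDecomposition.negPart

/-- The smoothly truncated singular integral `T_{φ_ε} ν (x)`. -/
def Tphi {d : ℕ} (K : EuclideanSpace ℝ (Fin d) → ℝ) (φ : ℝ → ℝ)
    (ν : SignedMeasure (EuclideanSpace ℝ (Fin d))) (ε : ℝ) (x : EuclideanSpace ℝ (Fin d)) : ℝ :=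
  (∫ y, φ (‖x - y‖ ^ 2 / ε ^ 2) * K (x - y) ∂ν.toJordanDecomposition.posPart)
    - ∫ y, φ (‖x - y‖ ^ 2 / ε ^ 2) * K (x - y) ∂ν.toJordanDecomposition.negPart

/-- The ρ-variation of the family `ε ↦ g ε` over non-increasing positive sequences. -/
def variation (ρ : ℝ) {E : Type*} [NormedAddCommGroup E] (g : ℝ → E) : ℝ≥0∞ :=
  ⨆ (ε : ℤ → ℝ) (_ : Antitone ε) (_ : ∀ m, 0 < ε m),
    (∑' m : ℤ, ENNReal.ofReal ‖g (ε m) - g (ε (m + 1))‖ ^ ρ) ^ (1 / ρ)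

/-- The dyadic interval `I_k = [2^{-k-1}, 2^{-k})`. -/
def Ik (k : ℤ) : Set ℝ := Set.Ico ((2 : ℝ) ^ (-k - 1)) ((2 : ℝ) ^ (-k))

/-- The short ρ-variation of the family `ε ↦ g ε`. -/
def shortVariation (ρ : ℝ) (g : ℝ → ℝ) : ℝ≥0∞ :=
  ⨆ (ε : ℤ → ℝ) (_ : Antitone ε) (_ : ∀ m, 0 < ε m),
    (∑' k : ℤ, ∑' m : ℤ,
      Set.indicator {m : ℤ | ε m ∈ Ik k ∧ ε (m + 1) ∈ Ik k}
        (fun m => ENNReal.ofReal |g (ε m) - g (ε (m + 1))| ^ ρ) m) ^ (1 / ρ)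

/-- The long ρ-variation of the family `ε ↦ g ε`. -/
def longVariation (ρ : ℝ) (g : ℝ → ℝ) : ℝ≥0∞ :=
  ⨆ (ε : ℤ → ℝ) (_ : Antitone ε) (_ : ∀ m, 0 < ε m),
    (∑' m : ℤ,
      Set.indicator {m : ℤ | ∃ j k : ℤ, j < k ∧ ε m ∈ Ik j ∧ ε (m + 1) ∈ Ik k}
        (fun m => ENNReal.ofReal |g (ε m) - g (ε (m + 1))| ^ ρ) m) ^ (1 / ρ)

/-- `φ` is an admissible smooth cutoff: non-decreasing, `C²`, with
`χ_{[4,∞)} ≤ φ ≤ χ_{[1/4,∞)}`. -/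
def IsCutoff (φ : ℝ → ℝ) : Prop :=
  Monotone φ ∧ ContDiff ℝ 2 φ ∧ (∀ t, 0 ≤ φ t) ∧ (∀ t, φ t ≤ 1) ∧
    (∀ t, 4 ≤ t → 1 ≤ φ t) ∧ ∀ t, t < 1 / 4 → φ t ≤ 0

/-- The truncated `n`-dimensional Riesz transform `R^μ_ε f (x)`. -/
def rieszT {d : ℕ} (n : ℕ) (μ : Measure (EuclideanSpace ℝ (Fin d)))
    (f : EuclideanSpace ℝ (Fin d) → ℝ) (ε : ℝ) (x : EuclideanSpace ℝ (Fin d)) :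
    EuclideanSpace ℝ (Fin d) :=
  ∫ y in {y | ε < dist x y}, (f y / ‖x - y‖ ^ (n + 1)) • (x - y) ∂μ

/-- The closed axis-parallel cube with center `z` and side length `ℓ`. -/
def cube {d : ℕ} (z : EuclideanSpace ℝ (Fin d)) (ℓ : ℝ) : Set (EuclideanSpace ℝ (Fin d)) :=
  {y | ∀ i, |y i - z i| ≤ ℓ / 2}

/-- The standard half-open dyadic cube `2^{-j}(k + [0,1)^d)` indexed by `Q = (j, k)`. -/
def dyadicCube (d : ℕ) (Q : ℤ × (Fin d → ℤ)) : Set (EuclideanSpace ℝ (Fin d)) :=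
  {x | ∀ i, (2 : ℝ) ^ (-Q.1) * Q.2 i ≤ x i ∧ x i < (2 : ℝ) ^ (-Q.1) * (Q.2 i + 1)}

/-- The μ-mean of `f` over `S` (with value `0` if `μ S` is zero or infinite). -/
def mQ {d : ℕ} (μ : Measure (EuclideanSpace ℝ (Fin d))) (S : Set (EuclideanSpace ℝ (Fin d)))
    (f : EuclideanSpace ℝ (Fin d) → ℝ) : ℝ :=
  (∫ x in S, f x ∂μ) / (μ S).toReal

/-- The centered Hardy–Littlewood maximal function of `g` w.r.t. `μ`. -/
def maximalFn {d : ℕ} (μ : Measure (EuclideanSpace ℝ (Fin d)))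
    (g : EuclideanSpace ℝ (Fin d) → ℝ) (y : EuclideanSpace ℝ (Fin d)) : ℝ≥0∞ :=
  ⨆ (R : ℝ) (_ : 0 < R),
    (∫⁻ w in Metric.closedBall y R, (‖g w‖₊ : ℝ≥0∞) ∂μ) / μ (Metric.closedBall y R)

/-- The weight `w_j = χ_{Q_j} (∑_k χ_{Q_k})⁻¹` associated to a family of cubes. -/
def wfun {d : ℕ} (J : Set ℕ) (Q : ℕ → Set (EuclideanSpace ℝ (Fin d))) (j : ℕ)
    (x : EuclideanSpace ℝ (Fin d)) : ℝ :=
  (Q j).indicator (fun _ => (∑' k : J, (Q (k : ℕ)).indicator (fun _ => (1 : ℝ)) x)⁻¹) x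

/-! Put the measure `ν = ∑_Q a_Q δ_Q` on the index set of the dyadic lattice. By the layer-cake
formula both sides are integrals over `t > 0` of the measures of superlevel sets, so it suffices to
compare them level by level. The superlevel set `{x | t < sup_{Q ∋ x} γ_Q}` is the union of the
cubes `Q` with `t < γ_Q`, and for any family `S` of dyadic cubes the packing condition, applied to
the coarsest cube of a finite subfamily and then inductively to the cubes outside it, gives
`∑_{Q ∈ S} a_Q ≤ c₃ μ(⋃_{Q ∈ S} Q)`. -/

lemma volume_restrict_Ioi_setOf_ofReal_lt (c : ℝ≥0∞) :
    volume.restrict (Ioi (0 : ℝ)) {t | ENNReal.ofReal t < c} = c := by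
  rw [Measure.restrict_apply' measurableSet_Ioi]
  rcases eq_or_ne c ⊤ with rfl | hc
  · simp
  · have : {t : ℝ | ENNReal.ofReal t < c} ∩ Ioi 0 = Ioo 0 c.toReal := by
      ext t
      simp only [mem_inter_iff, mem_ofPred_eq, mem_Ioi, mem_Ioo]
      constructor
      · rintro ⟨h, ht⟩
        exact ⟨ht, (ENNReal.ofReal_lt_iff_lt_toReal ht.le hc).1 h⟩
      · rintro ⟨ht, h⟩
        exact ⟨(ENNReal.ofReal_lt_iff_lt_toReal ht.le hc).2 h, ht⟩
    rw [this, Real.volume_Ioo, sub_zero, ENNReal.ofReal_toReal hc]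

theorem lintegral_eq_lintegral_meas_ofReal_lt {α : Type*} [MeasurableSpace α] (μ : Measure α)
    [SFinite μ] {f : α → ℝ≥0∞} (hf : Measurable f) :
    ∫⁻ x, f x ∂μ = ∫⁻ t in Ioi 0, μ {x | ENNReal.ofReal t < f x} := by
  have hs : MeasurableSet {p : α × ℝ | ENNReal.ofReal p.2 < f p.1} :=
    measurableSet_lt (ENNReal.measurable_ofReal.comp measurable_snd) (hf.comp measurable_fst)
  calc ∫⁻ x, f x ∂μ = ∫⁻ x, volume.restrict (Ioi 0) {t | ENNReal.ofReal t < f x} ∂μ := by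
        simp_rw [volume_restrict_Ioi_setOf_ofReal_lt]
    _ = μ.prod (volume.restrict (Ioi 0)) {p | ENNReal.ofReal p.2 < f p.1} :=
        (Measure.prod_apply hs).symm
    _ = ∫⁻ t in Ioi 0, μ {x | ENNReal.ofReal t < f x} := Measure.prod_apply_symm hs

lemma setOf_lt_iSup_mem {α ι β : Type*} [CompleteLinearOrder β] (s : ι → Set α) (g : ι → β)
    (t : β) : {x | t < ⨆ i, ⨆ (_ : x ∈ s i), g i} = ⋃ i ∈ {i | t < g i}, s i := by
  ext x
  simp [lt_iSup_iff, and_comm]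

lemma measurable_iSup_mem {α ι : Type*} [MeasurableSpace α] [Countable ι] {s : ι → Set α}
    (hs : ∀ i, MeasurableSet (s i)) (g : ι → ℝ≥0∞) :
    Measurable fun x => ⨆ i, ⨆ (_ : x ∈ s i), g i :=
  measurable_of_Ioi fun t => by
    simp only [preimage, mem_Ioi]
    rw [setOf_lt_iSup_mem]
    exact .biUnion (to_countable _) fun i _ => hs i

lemma MeasureTheory.Measure.sum_smul_dirac_apply {ι : Type*} [MeasurableSpace ι]
    [MeasurableSingletonClass ι] (c : ι → ℝ≥0∞) {S : Set ι} (hS : MeasurableSet S) :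
    Measure.sum (fun i => c i • Measure.dirac i) S = ∑' i, S.indicator c i := by
  simp only [Measure.sum_apply _ hS, Measure.smul_apply, smul_eq_mul, Measure.dirac_apply]
  congr 1 with i
  by_cases hi : i ∈ S <;> simp [hi]

lemma floor_two_zpow_mul_eq_floor_div (j : ℤ) (m : ℕ) (y : ℝ) :
    ⌊(2 : ℝ) ^ j * y⌋ = ⌊(2 : ℝ) ^ (j + m) * y⌋ / 2 ^ m := by
  have h : (2 : ℝ) ^ j * y = (2 : ℝ) ^ (j + m) * y / ((2 ^ m : ℕ) : ℝ) := by
    rw [zpow_add₀ two_ne_zero, zpow_natCast]; push_cast; field_simp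
  rw [h, Int.floor_div_natCast]; push_cast; rfl

lemma mem_dyadicCube_iff_floor {d : ℕ} {Q : ℤ × (Fin d → ℤ)} {x : EuclideanSpace ℝ (Fin d)} :
    x ∈ dyadicCube d Q ↔ ∀ i, ⌊(2 : ℝ) ^ Q.1 * x i⌋ = Q.2 i := by
  have h := zpow_pos (two_pos : (0 : ℝ) < 2) Q.1
  simp only [dyadicCube, mem_ofPred_eq, Int.floor_eq_iff, zpow_neg, ← div_eq_inv_mul,
    div_le_iff₀' h, lt_div_iff₀' h]

lemma dyadicCube_subset_of_le_of_nonempty_inter {d : ℕ} {Q R : ℤ × (Fin d → ℤ)}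
    (hRQ : R.1 ≤ Q.1) (hQR : (dyadicCube d Q ∩ dyadicCube d R).Nonempty) :
    dyadicCube d Q ⊆ dyadicCube d R := by
  obtain ⟨m, hm⟩ : ∃ m : ℕ, Q.1 = R.1 + m := ⟨(Q.1 - R.1).toNat, by omega⟩
  obtain ⟨x, hxQ, hxR⟩ := hQR
  intro y hy
  rw [mem_dyadicCube_iff_floor] at hxQ hxR hy ⊢
  intro i
  rw [floor_two_zpow_mul_eq_floor_div R.1 m, ← hm, hy i, ← hxQ i, hm,
    ← floor_two_zpow_mul_eq_floor_div, hxR i]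

lemma measurableSet_dyadicCube (d : ℕ) (Q : ℤ × (Fin d → ℤ)) : MeasurableSet (dyadicCube d Q) := by
  unfold dyadicCube
  measurability

section Packing

variable {d : ℕ} {μ : Measure (EuclideanSpace ℝ (Fin d))} {a : ℤ × (Fin d → ℤ) → ℝ≥0∞}
  {c : ℝ≥0∞}

lemma sum_le_mul_measure_biUnion_of_packing
    (hpack : ∀ R, ∑' Q : {Q // dyadicCube d Q ⊆ dyadicCube d R}, a Q ≤ c * μ (dyadicCube d R))
    (s : Finset (ℤ × (Fin d → ℤ))) : ∑ Q ∈ s, a Q ≤ c * μ (⋃ Q ∈ s, dyadicCube d Q) := by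
  classical
  induction s using Finset.strongInduction with
  | H s ih =>
  rcases s.eq_empty_or_nonempty with rfl | hs
  · simp
  -- `R` has the coarsest scale in `s`, so every cube of `s` either lies in `R` or misses it.
  obtain ⟨R, hR, hmin⟩ := s.exists_min_image Prod.fst hs
  set inner := s.filter fun Q => dyadicCube d Q ⊆ dyadicCube d R
  set outer := s.filter fun Q => ¬dyadicCube d Q ⊆ dyadicCube d R
  have houter : outer ⊂ s := Finset.filter_ssubset.2 ⟨R, hR, fun h => h subset_rfl⟩
  have hdisj : Disjoint (dyadicCube d R) (⋃ Q ∈ outer, dyadicCube d Q) := by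
    refine disjoint_iUnion₂_right.2 fun Q hQ => disjoint_comm.1 ?_
    rw [Finset.mem_filter] at hQ
    by_contra h
    exact hQ.2 (dyadicCube_subset_of_le_of_nonempty_inter (hmin Q hQ.1)
      (not_disjoint_iff_nonempty_inter.1 h))
  have hinner : ∑ Q ∈ inner, a Q ≤ ∑' Q : {Q // dyadicCube d Q ⊆ dyadicCube d R}, a Q := by
    rw [← Finset.sum_subtype_eq_sum_filter]
    exact ENNReal.sum_le_tsum _
  calc ∑ Q ∈ s, a Q = ∑ Q ∈ inner, a Q + ∑ Q ∈ outer, a Q :=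
        (Finset.sum_filter_add_sum_filter_not _ _ _).symm
    _ ≤ c * μ (dyadicCube d R) + c * μ (⋃ Q ∈ outer, dyadicCube d Q) :=
        add_le_add (hinner.trans (hpack R)) (ih outer houter)
    _ = c * μ (dyadicCube d R ∪ ⋃ Q ∈ outer, dyadicCube d Q) := by
        rw [measure_union hdisj (.biUnion (to_countable _) fun Q _ => measurableSet_dyadicCube d Q),
          mul_add]
    _ ≤ c * μ (⋃ Q ∈ s, dyadicCube d Q) := by
        gcongr
        exact union_subset (subset_biUnion_of_mem hR)
          (iUnion₂_subset fun Q hQ => subset_biUnion_of_mem (Finset.mem_filter.1 hQ).1)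

lemma tsum_indicator_le_mul_measure_biUnion_of_packing
    (hpack : ∀ R, ∑' Q : {Q // dyadicCube d Q ⊆ dyadicCube d R}, a Q ≤ c * μ (dyadicCube d R))
    (S : Set (ℤ × (Fin d → ℤ))) :
    ∑' Q, S.indicator a Q ≤ c * μ (⋃ Q ∈ S, dyadicCube d Q) := by
  classical
  rw [ENNReal.tsum_eq_iSup_sum]
  refine iSup_le fun s => ?_
  rw [Finset.sum_indicator_eq_sum_filter]
  refine (sum_le_mul_measure_biUnion_of_packing hpack _).trans ?_
  gcongr c * μ ?_
  exact iUnion₂_subset fun Q hQ => subset_biUnion_of_mem (Finset.mem_filter.1 hQ).2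

end Packing

/-- **dyadic Carleson embedding, supremum form.** If `{a_Q}` satisfies the
packing condition `∑_{Q ⊆ R} a_Q ≤ c₃ μ(R)` for all dyadic cubes `R`, then
`∑_Q γ_Q a_Q ≤ c₃ ∫ sup_{Q ∋ x} γ_Q dμ(x)` for all non-negative `{γ_Q}`. -/
theorem statement10 (d : ℕ) (μ : Measure (EuclideanSpace ℝ (Fin d)))
    [IsLocallyFiniteMeasure μ]
    (a : ℤ × (Fin d → ℤ) → NNReal) (c₃ : NNReal)
    (hpack : ∀ R : ℤ × (Fin d → ℤ),
      (∑' Q : {Q : ℤ × (Fin d → ℤ) // dyadicCube d Q ⊆ dyadicCube d R}, (a Q.1 : ℝ≥0∞))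
        ≤ c₃ * μ (dyadicCube d R))
    (γ : ℤ × (Fin d → ℤ) → NNReal) :
    (∑' Q : ℤ × (Fin d → ℤ), (γ Q : ℝ≥0∞) * (a Q : ℝ≥0∞))
      ≤ (c₃ : ℝ≥0∞) *
          ∫⁻ x, ⨆ (Q : ℤ × (Fin d → ℤ)) (_ : x ∈ dyadicCube d Q), (γ Q : ℝ≥0∞) ∂μ := by
  set ν := Measure.sum fun Q => (a Q : ℝ≥0∞) • Measure.dirac Q
  calc ∑' Q, (γ Q : ℝ≥0∞) * a Q = ∫⁻ Q, (γ Q : ℝ≥0∞) ∂ν := by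
        simp only [ν, lintegral_sum_measure, lintegral_smul_measure, lintegral_dirac, smul_eq_mul,
          mul_comm]
    _ = ∫⁻ t in Ioi 0, ν {Q | ENNReal.ofReal t < γ Q} :=
        lintegral_eq_lintegral_meas_ofReal_lt ν (measurable_of_countable _)
    _ ≤ ∫⁻ t in Ioi 0, c₃ * μ {x | ENNReal.ofReal t <
          ⨆ (Q : ℤ × (Fin d → ℤ)) (_ : x ∈ dyadicCube d Q), (γ Q : ℝ≥0∞)} := by
        refine lintegral_mono fun t => ?_
        rw [Measure.sum_smul_dirac_apply _ (to_countable _).measurableSet, setOf_lt_iSup_mem]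
        exact tsum_indicator_le_mul_measure_biUnion_of_packing hpack _
    _ = c₃ * ∫⁻ x, ⨆ (Q : ℤ × (Fin d → ℤ)) (_ : x ∈ dyadicCube d Q), (γ Q : ℝ≥0∞) ∂μ := by
        rw [lintegral_const_mul' _ _ coe_ne_top, lintegral_eq_lintegral_meas_ofReal_lt μ
          (measurable_iSup_mem (measurableSet_dyadicCube d) _)]

end
end

section
/- Let μ be a Radon measure on ℝ^d with polynomial growth of degree n, i.e. μ(B(x,R)) ≤ C₀R^n for all x ∈ ℝ^d and R > 0, and let K : ℝ^d \ {0} → ℝ satisfy |∂_{x_i}K(x)| ≤ C_K|x|^{−n−1} for all x ≠ 0 and 1 ≤ i ≤ d. Let ν be a finite real Radon measure supported in a ball B(z,r) with total mass ν(ℝ^d) = 0. Then ∫_{ℝ^d \ B(z,2r)} |∫ K(x−y) dν(y)| dμ(x) ≤ C‖ν‖, where C depends only on n, d, C₀ and C_K, and ‖ν‖ is the total variation of ν. -/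
open MeasureTheory Set ENNReal

noncomputable section

/-! Since `ν` has total mass zero, `∫ K(x-y) dν(y) = ∫ (K(x-y) - K(x-z)) dν(y)`, and for
`x ∉ B(z,2r)` the mean value theorem bounds the integrand by `2^(n+1) C_K r / |x-z|^(n+1)`
on `B(z,r)`. Splitting `ℝ^d ∖ B(z,2r)` into the dyadic annuli around `z`, polynomial growth
makes the `j`-th annulus contribute `O(2^{-j}) ‖ν‖`, and the geometric series converges. -/

theorem norm_sub_le_of_norm_fderiv_le_div_pow {E F : Type*} [NormedAddCommGroup E]
    [NormedSpace ℝ E] [NormedAddCommGroup F] [NormedSpace ℝ F] {K : E → F} {C : ℝ} {n : ℕ}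
    (hC : 0 ≤ C) (hdiff : ∀ x : E, x ≠ 0 → DifferentiableAt ℝ K x)
    (hgrad : ∀ x : E, x ≠ 0 → ‖fderiv ℝ K x‖ ≤ C / ‖x‖ ^ (n + 1))
    {u v : E} (huv : 2 * ‖u - v‖ < ‖v‖) :
    ‖K u - K v‖ ≤ 2 ^ (n + 1) * C / ‖v‖ ^ (n + 1) * ‖u - v‖ := by
  have hseg : ∀ w ∈ segment ℝ v u, ‖v‖ / 2 < ‖w‖ := by
    rw [segment_eq_image']
    rintro _ ⟨t, ⟨ht0, ht1⟩, rfl⟩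
    have : ‖t • (u - v)‖ ≤ ‖u - v‖ := by
      rw [norm_smul, Real.norm_of_nonneg ht0]
      exact mul_le_of_le_one_left (norm_nonneg _) ht1
    have htri := norm_sub_le (v + t • (u - v)) (t • (u - v))
    rw [add_sub_cancel_right] at htri
    show ‖v‖ / 2 < ‖v + t • (u - v)‖
    linarith
  have hv : 0 < ‖v‖ / 2 := by linarith [norm_nonneg (u - v)]
  have hne : ∀ w ∈ segment ℝ v u, w ≠ 0 := fun w hw => norm_pos_iff.1 (hv.trans (hseg w hw))
  have hbound : ∀ w ∈ segment ℝ v u, ‖fderiv ℝ K w‖ ≤ 2 ^ (n + 1) * C / ‖v‖ ^ (n + 1) := by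
    intro w hw
    calc ‖fderiv ℝ K w‖ ≤ C / ‖w‖ ^ (n + 1) := hgrad w (hne w hw)
      _ ≤ C / (‖v‖ / 2) ^ (n + 1) := by gcongr; exact (hseg w hw).le
      _ = 2 ^ (n + 1) * C / ‖v‖ ^ (n + 1) := by rw [div_pow, div_div_eq_mul_div, mul_comm]
  exact Convex.norm_image_sub_le_of_norm_hasFDerivWithin_le
    (fun w hw => (hdiff w (hne w hw)).hasFDerivAt.hasFDerivWithinAt) hbound
    (convex_segment v u) (left_mem_segment ℝ v u) (right_mem_segment ℝ v u)

theorem abs_integral_sub_integral_le_of_measureReal_univ_eq {X : Type*} [MeasurableSpace X]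
    {μ₁ μ₂ : Measure X} [IsFiniteMeasure μ₁] [IsFiniteMeasure μ₂]
    (hmass : μ₁.real univ = μ₂.real univ) {f : X → ℝ}
    (hf₁ : AEStronglyMeasurable f μ₁) (hf₂ : AEStronglyMeasurable f μ₂) {c M : ℝ}
    (hM₁ : ∀ᵐ y ∂μ₁, |f y - c| ≤ M) (hM₂ : ∀ᵐ y ∂μ₂, |f y - c| ≤ M) :
    |∫ y, f y ∂μ₁ - ∫ y, f y ∂μ₂| ≤ M * (μ₁.real univ + μ₂.real univ) := by
  have hg₁ : Integrable (fun y => f y - c) μ₁ :=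
    .of_bound (hf₁.sub aestronglyMeasurable_const) M hM₁
  have hg₂ : Integrable (fun y => f y - c) μ₂ :=
    .of_bound (hf₂.sub aestronglyMeasurable_const) M hM₂
  have hsplit : ∀ (μ : Measure X) [IsFiniteMeasure μ], Integrable (fun y => f y - c) μ →
      ∫ y, f y ∂μ = ∫ y, (f y - c) ∂μ + μ.real univ * c := by
    intro μ _ hg
    rw [← smul_eq_mul, ← integral_const, ← integral_add hg (integrable_const c)]
    simp only [sub_add_cancel]
  rw [hsplit μ₁ hg₁, hsplit μ₂ hg₂, hmass, add_sub_add_right_eq_sub, mul_add]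
  have hb₁ := norm_integral_le_of_norm_le_const (f := fun y => f y - c) hM₁
  have hb₂ := norm_integral_le_of_norm_le_const (f := fun y => f y - c) hM₂
  exact (abs_sub _ _).trans (add_le_add (hmass ▸ hb₁) hb₂)

theorem SignedMeasure.abs_integral_posPart_sub_negPart_le {X : Type*} [MeasurableSpace X]
    {ν : SignedMeasure X} (hν : ν univ = 0) {S : Set X} (hS : ν.totalVariation Sᶜ = 0)
    {f : X → ℝ} (hf : AEStronglyMeasurable f ν.totalVariation) {c M : ℝ}
    (hM : ∀ y ∈ S, |f y - c| ≤ M) :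
    |∫ y, f y ∂ν.toJordanDecomposition.posPart - ∫ y, f y ∂ν.toJordanDecomposition.negPart|
      ≤ M * (ν.totalVariation univ).toReal := by
  set ν₁ := ν.toJordanDecomposition.posPart
  set ν₂ := ν.toJordanDecomposition.negPart
  have hν₁ : ν₁ ≪ ν.totalVariation :=
    Measure.absolutelyContinuous_of_le (Measure.le_add_right le_rfl)
  have hν₂ : ν₂ ≪ ν.totalVariation :=
    Measure.absolutelyContinuous_of_le (Measure.le_add_left le_rfl)
  have hMae : ∀ᵐ y ∂ν.totalVariation, |f y - c| ≤ M := (ae_iff.2 hS).mono hM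
  have hmass : ν₁.real univ = ν₂.real univ := by
    have h := Measure.toSignedMeasure_sub_apply (μ := ν₁) (ν := ν₂) MeasurableSet.univ
    rw [← JordanDecomposition.toSignedMeasure, SignedMeasure.toSignedMeasure_toJordanDecomposition,
      hν] at h
    linarith
  have htv : (ν.totalVariation univ).toReal = ν₁.real univ + ν₂.real univ := by
    rw [SignedMeasure.totalVariation, Measure.add_apply,
      ENNReal.toReal_add (measure_ne_top _ _) (measure_ne_top _ _)]
    rfl
  rw [htv]
  exact abs_integral_sub_integral_le_of_measureReal_univ_eq hmass (hf.mono_ac hν₁)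
    (hf.mono_ac hν₂) (hν₁.ae_le hMae) (hν₂.ae_le hMae)

theorem lintegral_compl_closedBall_inv_dist_pow_le {X : Type*} [PseudoMetricSpace X]
    [MeasurableSpace X] [OpensMeasurableSpace X] {μ : Measure X} {z : X} {n : ℕ} {C₀ : ℝ}
    (hμ : ∀ R : ℝ, 0 < R → μ (Metric.closedBall z R) ≤ ENNReal.ofReal (C₀ * R ^ n))
    {R : ℝ} (hR : 0 < R) :
    ∫⁻ x in (Metric.closedBall z R)ᶜ, ENNReal.ofReal (dist x z ^ (n + 1))⁻¹ ∂μ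
      ≤ ENNReal.ofReal (2 ^ (n + 1) * C₀ / R) := by
  set A : ℕ → Set X := fun j => Metric.ball z (2 ^ (j + 1) * R) \ Metric.ball z (2 ^ j * R)
  have hcover : (Metric.closedBall z R)ᶜ ⊆ ⋃ j, A j := by
    intro x hx
    have hx' : 1 < dist x z / R := by
      rw [one_lt_div hR]; simpa using hx
    obtain ⟨j, hj, hj'⟩ := exists_nat_pow_near hx'.le one_lt_two
    rw [le_div_iff₀ hR] at hj
    rw [div_lt_iff₀ hR] at hj'
    exact mem_iUnion.2 ⟨j, by simpa [A] using ⟨hj', hj⟩⟩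
  have hA : ∀ j : ℕ, ∫⁻ x in A j, ENNReal.ofReal (dist x z ^ (n + 1))⁻¹ ∂μ
      ≤ ENNReal.ofReal (2 ^ n * C₀ / R) * 2⁻¹ ^ j := by
    intro j
    calc ∫⁻ x in A j, ENNReal.ofReal (dist x z ^ (n + 1))⁻¹ ∂μ
        ≤ ∫⁻ x in A j, ENNReal.ofReal ((2 ^ j * R) ^ (n + 1))⁻¹ ∂μ := by
          refine setLIntegral_mono' (by measurability) fun x hx => ?_
          have : 2 ^ j * R ≤ dist x z := by simpa [A] using hx.2
          gcongr
      _ = ENNReal.ofReal ((2 ^ j * R) ^ (n + 1))⁻¹ * μ (A j) := setLIntegral_const _ _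
      _ ≤ ENNReal.ofReal ((2 ^ j * R) ^ (n + 1))⁻¹
            * ENNReal.ofReal (C₀ * (2 ^ (j + 1) * R) ^ n) := by
          gcongr
          exact (measure_mono (sdiff_subset.trans Metric.ball_subset_closedBall)).trans
            (hμ _ (by positivity))
      _ = ENNReal.ofReal (2 ^ n * C₀ / R) * 2⁻¹ ^ j := by
          have h2 : (2⁻¹ : ℝ≥0∞) = ENNReal.ofReal 2⁻¹ := by
            rw [ENNReal.ofReal_inv_of_pos two_pos, ENNReal.ofReal_ofNat]
          rw [← ENNReal.ofReal_mul (by positivity), h2, ← ENNReal.ofReal_pow (by norm_num),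
            ← ENNReal.ofReal_mul' (by positivity)]
          congr 1
          rw [inv_pow]
          field_simp
          ring
  calc ∫⁻ x in (Metric.closedBall z R)ᶜ, ENNReal.ofReal (dist x z ^ (n + 1))⁻¹ ∂μ
      ≤ ∑' j, ∫⁻ x in A j, ENNReal.ofReal (dist x z ^ (n + 1))⁻¹ ∂μ :=
        (lintegral_mono_set hcover).trans (lintegral_iUnion_le _ _)
    _ ≤ ∑' j : ℕ, ENNReal.ofReal (2 ^ n * C₀ / R) * 2⁻¹ ^ j := ENNReal.tsum_le_tsum hA
    _ = ENNReal.ofReal (2 ^ (n + 1) * C₀ / R) := by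
        rw [ENNReal.tsum_mul_left, ENNReal.tsum_geometric, ENNReal.one_sub_inv_two, inv_inv,
          ← ENNReal.ofReal_ofNat 2, ← ENNReal.ofReal_mul' zero_le_two]
        congr 1
        ring

theorem abs_Tfull_le {d n : ℕ} {K : EuclideanSpace ℝ (Fin d) → ℝ} {CK : ℝ} (hCK : 0 ≤ CK)
    (hKdiff : ∀ x : EuclideanSpace ℝ (Fin d), x ≠ 0 → DifferentiableAt ℝ K x)
    (hKgrad : ∀ x : EuclideanSpace ℝ (Fin d), x ≠ 0 → ‖fderiv ℝ K x‖ ≤ CK / ‖x‖ ^ (n + 1))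
    {ν : SignedMeasure (EuclideanSpace ℝ (Fin d))} (hν : ν univ = 0)
    {z : EuclideanSpace ℝ (Fin d)} {r : ℝ}
    (hsupp : ν.totalVariation (Metric.closedBall z r)ᶜ = 0)
    {x : EuclideanSpace ℝ (Fin d)} (hx : 2 * r < dist x z) :
    |Tfull K ν x|
      ≤ 2 ^ (n + 1) * CK * r / dist x z ^ (n + 1) * (ν.totalVariation univ).toReal := by
  have hshift : ∀ y ∈ Metric.closedBall z r, ‖(x - y) - (x - z)‖ ≤ r := fun y hy => by
    rw [_root_.sub_sub_sub_cancel_left, ← dist_eq_norm]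
    exact Metric.mem_closedBall'.1 hy
  have hclose : ∀ y ∈ Metric.closedBall z r, 2 * ‖(x - y) - (x - z)‖ < ‖x - z‖ := fun y hy => by
    rw [← dist_eq_norm x z]
    linarith [hshift y hy]
  have hcont : ContinuousOn (fun y => K (x - y)) (Metric.closedBall z r) := fun y hy =>
    have hxy : x - y ≠ 0 := fun h => by
      have := hclose y hy
      rw [h, zero_sub, norm_neg] at this
      linarith [norm_nonneg (x - z)]
    ((hKdiff _ hxy).continuousAt.comp (continuous_sub_left x).continuousAt).continuousWithinAt
  have hmeas : AEStronglyMeasurable (fun y => K (x - y)) ν.totalVariation := by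
    rw [← Measure.restrict_eq_self_of_ae_mem (ae_iff.2 hsupp)]
    exact hcont.aestronglyMeasurable measurableSet_closedBall
  refine SignedMeasure.abs_integral_posPart_sub_negPart_le hν hsupp hmeas (c := K (x - z))
    fun y hy => ?_
  calc |K (x - y) - K (x - z)|
      ≤ 2 ^ (n + 1) * CK / ‖x - z‖ ^ (n + 1) * ‖(x - y) - (x - z)‖ :=
        norm_sub_le_of_norm_fderiv_le_div_pow hCK hKdiff hKgrad (hclose y hy)
    _ ≤ 2 ^ (n + 1) * CK / ‖x - z‖ ^ (n + 1) * r := by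
        gcongr
        exact hshift y hy
    _ = 2 ^ (n + 1) * CK * r / dist x z ^ (n + 1) := by rw [dist_eq_norm]; ring

theorem statement13_general (n d : ℕ) (C₀ CK : ℝ)
    (hC₀ : 0 < C₀) (hCK : 0 < CK) :
    ∃ C : ℝ, 0 < C ∧
      ∀ (μ : Measure (EuclideanSpace ℝ (Fin d))),
        (∀ (x : EuclideanSpace ℝ (Fin d)) (R : ℝ), 0 < R →
          μ (Metric.closedBall x R) ≤ ENNReal.ofReal (C₀ * R ^ n)) →
      ∀ K : EuclideanSpace ℝ (Fin d) → ℝ,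
        (∀ x : EuclideanSpace ℝ (Fin d), x ≠ 0 → DifferentiableAt ℝ K x) →
        (∀ x : EuclideanSpace ℝ (Fin d), x ≠ 0 → ‖fderiv ℝ K x‖ ≤ CK / ‖x‖ ^ (n + 1)) →
      ∀ (ν : SignedMeasure (EuclideanSpace ℝ (Fin d))) (z : EuclideanSpace ℝ (Fin d)) (r : ℝ),
        0 < r →
        ν.totalVariation (Metric.closedBall z r)ᶜ = 0 →
        ν Set.univ = 0 →
        (∫⁻ x in (Metric.closedBall z (2 * r))ᶜ, ENNReal.ofReal |Tfull K ν x| ∂μ)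
          ≤ ENNReal.ofReal (C * (ν.totalVariation Set.univ).toReal) := by
  refine ⟨2 ^ (2 * n + 1) * CK * C₀, by positivity, ?_⟩
  intro μ hμ K hKdiff hKgrad ν z r hr hsupp hν
  set T := (ν.totalVariation univ).toReal
  calc ∫⁻ x in (Metric.closedBall z (2 * r))ᶜ, ENNReal.ofReal |Tfull K ν x| ∂μ
      ≤ ∫⁻ x in (Metric.closedBall z (2 * r))ᶜ,
          ENNReal.ofReal (2 ^ (n + 1) * CK * r * T)
            * ENNReal.ofReal (dist x z ^ (n + 1))⁻¹ ∂μ := by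
        refine setLIntegral_mono' measurableSet_closedBall.compl fun x hx => ?_
        have hx : 2 * r < dist x z := by simpa using hx
        rw [← ENNReal.ofReal_mul (by positivity)]
        refine ENNReal.ofReal_le_ofReal
          ((abs_Tfull_le hCK.le hKdiff hKgrad hν hsupp hx).trans_eq ?_)
        ring
    _ = ENNReal.ofReal (2 ^ (n + 1) * CK * r * T) *
          ∫⁻ x in (Metric.closedBall z (2 * r))ᶜ, ENNReal.ofReal (dist x z ^ (n + 1))⁻¹ ∂μ :=
        lintegral_const_mul' _ _ ENNReal.ofReal_ne_top
    _ ≤ ENNReal.ofReal (2 ^ (n + 1) * CK * r * T)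
          * ENNReal.ofReal (2 ^ (n + 1) * C₀ / (2 * r)) := by
        gcongr
        exact lintegral_compl_closedBall_inv_dist_pow_le (hμ z) (by positivity)
    _ = ENNReal.ofReal (2 ^ (2 * n + 1) * CK * C₀ * T) := by
        rw [← ENNReal.ofReal_mul (by positivity)]
        congr 1
        field_simp
        ring

/-- If `μ` has `n`-polynomial growth, `K` has a gradient bound
`|∇K(x)| ≤ C_K |x|^{-n-1}`, and `ν` is a finite real Radon measure supported in `B(z,r)`
with `ν(ℝ^d) = 0`, then `∫_{ℝ^d ∖ B(z,2r)} |∫ K(x-y) dν(y)| dμ(x) ≤ C ‖ν‖`. -/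
theorem statement13 (n d : ℕ) (hn : 1 ≤ n) (hnd : n < d) (C₀ CK : ℝ)
    (hC₀ : 0 < C₀) (hCK : 0 < CK) :
    ∃ C : ℝ, 0 < C ∧
      ∀ (μ : Measure (EuclideanSpace ℝ (Fin d))),
        (∀ (x : EuclideanSpace ℝ (Fin d)) (R : ℝ), 0 < R →
          μ (Metric.closedBall x R) ≤ ENNReal.ofReal (C₀ * R ^ n)) →
      ∀ K : EuclideanSpace ℝ (Fin d) → ℝ,
        (∀ x : EuclideanSpace ℝ (Fin d), x ≠ 0 → DifferentiableAt ℝ K x) →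
        (∀ x : EuclideanSpace ℝ (Fin d), x ≠ 0 → ‖fderiv ℝ K x‖ ≤ CK / ‖x‖ ^ (n + 1)) →
      ∀ (ν : SignedMeasure (EuclideanSpace ℝ (Fin d))) (z : EuclideanSpace ℝ (Fin d)) (r : ℝ),
        0 < r →
        ν.totalVariation (Metric.closedBall z r)ᶜ = 0 →
        ν Set.univ = 0 →
        (∫⁻ x in (Metric.closedBall z (2 * r))ᶜ, ENNReal.ofReal |Tfull K ν x| ∂μ)
          ≤ ENNReal.ofReal (C * (ν.totalVariation Set.univ).toReal) :=
  statement13_general n d C₀ CK hC₀ hCK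

end
end

section
/- Let K : ℝ^d \ {0} → ℝ satisfy |K(x)| ≤ C_K|x|^{−n} for all x ≠ 0 and let ρ ≥ 1. There is a constant C, depending only on n, d and C_K, such that for every 0 < N₀ < N, every finite real Radon measure ν on ℝ^d with supp ν ∩ B(0,N) = ∅, and every x ∈ ℝ^d with |x| ≤ N₀, one has (V^S_ρ∘T)ν(x) ≤ C (N−N₀)^{−n} ‖ν‖. -/
/-! On the support of `ν` we have `|y| ≥ N`, hence `|x - y| ≥ N - N₀` and
`|K(x - y)| ≤ C_K (N - N₀)^{-n}`. Along a non-increasing sequence `ε_m` the differences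
`T_{ε_m}ν(x) - T_{ε_{m+1}}ν(x)` are integrals of this bounded kernel over disjoint annuli, so
even the full `ℓ¹`-variation is `O((N - N₀)^{-n} ‖ν‖)`; the short `ρ`-variation,
which only keeps some of the jumps and takes an `ℓ^ρ`-norm with `ρ ≥ 1`, is smaller still. -/

open MeasureTheory Set ENNReal

noncomputable section

lemma Set.subsingleton_of_forall_lt_notMem {α : Type*} [LinearOrder α] {s : Set α}
    (h : ∀ ⦃j k⦄, j < k → j ∈ s → k ∉ s) : s.Subsingleton := fun j hj k hk => by
  rcases lt_trichotomy j k with hjk | hjk | hjk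
  exacts [absurd hk (h hjk hj), hjk, absurd hj (h hjk hk)]

lemma subsingleton_setOf_mem_Ik (t : ℝ) : {k | t ∈ Ik k}.Subsingleton :=
  Set.subsingleton_of_forall_lt_notMem fun _ _ hjk hj hk =>
    (hk.2.trans_le ((zpow_le_zpow_right₀ one_le_two (by omega)).trans hj.1)).false

lemma ENNReal.tsum_indicator_const_le_of_subsingleton {ι : Type*} {s : Set ι}
    (hs : s.Subsingleton) (c : ℝ≥0∞) : ∑' i, s.indicator (fun _ => c) i ≤ c := by
  rcases hs.eq_empty_or_singleton with rfl | ⟨i, rfl⟩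
  · simp
  · rw [tsum_eq_single i fun j hj => Set.indicator_of_notMem (Set.notMem_singleton_iff.mpr hj) _,
      Set.indicator_of_mem (Set.mem_singleton i)]

lemma ENNReal.sum_rpow_le_rpow_sum {ι : Type*} (s : Finset ι) (a : ι → ℝ≥0∞) {p : ℝ}
    (hp : 1 ≤ p) : ∑ i ∈ s, a i ^ p ≤ (∑ i ∈ s, a i) ^ p := by
  induction s using Finset.cons_induction with
  | empty => simp [ENNReal.zero_rpow_of_pos (zero_lt_one.trans_le hp)]
  | cons i s hi ih =>
    rw [Finset.sum_cons, Finset.sum_cons]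
    exact (add_le_add_right ih _).trans (ENNReal.add_rpow_le_rpow_add _ _ hp)

lemma ENNReal.tsum_rpow_le_rpow_tsum {ι : Type*} (a : ι → ℝ≥0∞) {p : ℝ} (hp : 1 ≤ p) :
    ∑' i, a i ^ p ≤ (∑' i, a i) ^ p := by
  rw [ENNReal.tsum_eq_iSup_sum]
  exact iSup_le fun s => (ENNReal.sum_rpow_le_rpow_sum s a hp).trans
    (ENNReal.rpow_le_rpow (ENNReal.sum_le_tsum s) (zero_le_one.trans hp))

lemma shortVariation_le_of_tsum_le {ρ : ℝ} (hρ : 1 ≤ ρ) {g : ℝ → ℝ} {S : ℝ≥0∞}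
    (h : ∀ ε : ℤ → ℝ, Antitone ε → (∀ m, 0 < ε m) →
      ∑' m, ENNReal.ofReal |g (ε m) - g (ε (m + 1))| ≤ S) :
    shortVariation ρ g ≤ S := by
  refine iSup_le fun ε => iSup_le fun hε => iSup_le fun hpos => ?_
  set a : ℤ → ℝ≥0∞ := fun m => ENNReal.ofReal |g (ε m) - g (ε (m + 1))|
  have hshort : ∀ m, ∑' k, {m : ℤ | ε m ∈ Ik k ∧ ε (m + 1) ∈ Ik k}.indicator (a · ^ ρ) m
      ≤ a m ^ ρ := fun m =>
    ENNReal.tsum_indicator_const_le_of_subsingleton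
      ((subsingleton_setOf_mem_Ik (ε m)).anti fun _ hk => hk.1) (a m ^ ρ)
  rw [one_div, ENNReal.rpow_inv_le_iff (zero_lt_one.trans_le hρ), ENNReal.tsum_comm]
  calc _ ≤ ∑' m, a m ^ ρ := ENNReal.tsum_le_tsum hshort
    _ ≤ (∑' m, a m) ^ ρ := ENNReal.tsum_rpow_le_rpow_tsum a hρ
    _ ≤ S ^ ρ := ENNReal.rpow_le_rpow (h ε hε hpos) (zero_le_one.trans hρ)

section SetIntegral

variable {E : Type*} [MeasurableSpace E] {μ : Measure E} [IsFiniteMeasure μ] {f : E → ℝ}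
  {B : ℝ}

lemma ofReal_abs_setIntegral_le (hB : 0 ≤ B) (hf : ∀ᵐ y ∂μ, |f y| ≤ B) (s : Set E) :
    ENNReal.ofReal |∫ y in s, f y ∂μ| ≤ ENNReal.ofReal B * μ s := by
  have hbound := norm_setIntegral_le_of_norm_le_const_ae (measure_lt_top μ s)
    (ae_restrict_of_ae (hf.mono fun _ hy => (Real.norm_eq_abs _).trans_le hy))
  rw [← ENNReal.ofReal_toReal (measure_ne_top μ s), ← ENNReal.ofReal_mul hB]
  exact ENNReal.ofReal_le_ofReal hbound

/-- Consecutive differences are integrals over the disjoint shells `S (m+1) \ S m`, except that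
`f` need not be measurable, so `∫_{S m} f` may be the junk value `0`: this happens from the first
non-integrable `S (m+1)` on, and that single jump costs the second `B μ(E)`. -/
lemma tsum_ofReal_abs_sub_setIntegral_le (hB : 0 ≤ B) (hf : ∀ᵐ y ∂μ, |f y| ≤ B)
    {S : ℤ → Set E} (hS : Monotone S) (hSm : ∀ m, MeasurableSet (S m)) :
    ∑' m, ENNReal.ofReal |(∫ y in S m, f y ∂μ) - ∫ y in S (m + 1), f y ∂μ|
      ≤ 2 * (ENNReal.ofReal B * μ univ) := by
  set last : Set ℤ := {m | IntegrableOn f (S m) μ ∧ ¬ IntegrableOn f (S (m + 1)) μ}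
  have hlast : last.Subsingleton := Set.subsingleton_of_forall_lt_notMem fun _ _ hjk hj hk =>
    hj.2 (hk.1.mono_set (hS (by omega)))
  have hdisj : Pairwise fun j k => Disjoint (S (j + 1) \ S j) (S (k + 1) \ S k) := by
    intro j k hjk
    wlog h : j < k generalizing j k
    · exact (this hjk.symm (hjk.lt_or_gt.resolve_left h)).symm
    exact Set.disjoint_left.mpr fun y hy hy' => hy'.2 (hS (by omega) hy.1)
  have hterm : ∀ m, ENNReal.ofReal |(∫ y in S m, f y ∂μ) - ∫ y in S (m + 1), f y ∂μ|
      ≤ ENNReal.ofReal B * μ (S (m + 1) \ S m)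
        + last.indicator (fun _ => ENNReal.ofReal B * μ univ) m := by
    intro m
    by_cases hnext : IntegrableOn f (S (m + 1)) μ
    · rw [abs_sub_comm, ← setIntegral_sdiff (hSm m) hnext (hS (by omega))]
      exact le_add_right (ofReal_abs_setIntegral_le hB hf _)
    · rw [integral_undef hnext, sub_zero]
      by_cases hcur : IntegrableOn f (S m) μ
      · rw [Set.indicator_of_mem (show m ∈ last from ⟨hcur, hnext⟩)]
        exact le_add_left ((ofReal_abs_setIntegral_le hB hf _).trans
          (mul_le_mul_right (measure_mono (subset_univ _)) _))
      · simp [integral_undef hcur]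
  calc _ ≤ ∑' m, (ENNReal.ofReal B * μ (S (m + 1) \ S m)
          + last.indicator (fun _ => ENNReal.ofReal B * μ univ) m) := ENNReal.tsum_le_tsum hterm
    _ = ENNReal.ofReal B * μ (⋃ m, S (m + 1) \ S m)
          + ∑' m, last.indicator (fun _ => ENNReal.ofReal B * μ univ) m := by
      rw [ENNReal.tsum_add, ENNReal.tsum_mul_left,
        measure_iUnion hdisj fun m => (hSm (m + 1)).diff (hSm m)]
    _ ≤ ENNReal.ofReal B * μ univ + ENNReal.ofReal B * μ univ :=
      add_le_add (mul_le_mul_right (measure_mono (subset_univ _)) _)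
        (ENNReal.tsum_indicator_const_le_of_subsingleton hlast _)
    _ = 2 * (ENNReal.ofReal B * μ univ) := (two_mul _).symm

end SetIntegral

lemma tsum_ofReal_abs_sub_Tnu_le {d : ℕ} {K : EuclideanSpace ℝ (Fin d) → ℝ}
    {ν : SignedMeasure (EuclideanSpace ℝ (Fin d))} {x : EuclideanSpace ℝ (Fin d)} {B : ℝ}
    (hB : 0 ≤ B) (hK : ∀ᵐ y ∂ν.totalVariation, |K (x - y)| ≤ B) {ε : ℤ → ℝ}
    (hε : Antitone ε) :
    ∑' m, ENNReal.ofReal |Tnu K ν (ε m) x - Tnu K ν (ε (m + 1)) x|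
      ≤ 2 * ENNReal.ofReal B * ν.totalVariation univ := by
  set μp := ν.toJordanDecomposition.posPart
  set μn := ν.toJordanDecomposition.negPart
  have hKp : ∀ᵐ y ∂μp, |K (x - y)| ≤ B := ae_mono (Measure.le_add_right le_rfl) hK
  have hKn : ∀ᵐ y ∂μn, |K (x - y)| ≤ B := ae_mono (Measure.le_add_left le_rfl) hK
  have hS : Monotone fun m => {y | ε m < dist x y} := fun _ _ h _ hy => (hε h).trans_lt hy
  have hSm : ∀ m, MeasurableSet {y | ε m < dist x y} := fun _ =>
    measurableSet_lt measurable_const (measurable_const.dist measurable_id)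
  have hsub : ∀ a b c e : ℝ, ENNReal.ofReal |a - b - (c - e)|
      ≤ ENNReal.ofReal |a - c| + ENNReal.ofReal |b - e| := fun _ _ _ _ =>
    (ENNReal.ofReal_le_ofReal ((abs_sub _ _).trans_eq' (by ring_nf))).trans ENNReal.ofReal_add_le
  have hsplit : ∀ m, ENNReal.ofReal |Tnu K ν (ε m) x - Tnu K ν (ε (m + 1)) x|
      ≤ ENNReal.ofReal |(∫ y in {y | ε m < dist x y}, K (x - y) ∂μp)
            - ∫ y in {y | ε (m + 1) < dist x y}, K (x - y) ∂μp|
        + ENNReal.ofReal |(∫ y in {y | ε m < dist x y}, K (x - y) ∂μn)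
            - ∫ y in {y | ε (m + 1) < dist x y}, K (x - y) ∂μn| := fun _ => hsub _ _ _ _
  calc _ ≤ _ := ENNReal.tsum_le_tsum hsplit
    _ ≤ 2 * (ENNReal.ofReal B * μp univ) + 2 * (ENNReal.ofReal B * μn univ) := by
      rw [ENNReal.tsum_add]
      exact add_le_add (tsum_ofReal_abs_sub_setIntegral_le hB hKp hS hSm)
        (tsum_ofReal_abs_sub_setIntegral_le hB hKn hS hSm)
    _ = 2 * ENNReal.ofReal B * ν.totalVariation univ := by
      rw [SignedMeasure.totalVariation, Measure.add_apply]
      ring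

lemma abs_le_div_pow_of_le_norm {E : Type*} [NormedAddCommGroup E] {K : E → ℝ} {C : ℝ} {n : ℕ}
    (hK : ∀ z, z ≠ 0 → |K z| ≤ C / ‖z‖ ^ n) {r : ℝ} (hr : 0 < r) {z : E} (hz : r ≤ ‖z‖) :
    |K z| ≤ C / r ^ n := by
  have hz0 : z ≠ 0 := norm_pos_iff.mp (hr.trans_le hz)
  have hC : 0 ≤ C := by
    have := (abs_nonneg _).trans (hK z hz0)
    rwa [le_div_iff₀ (by positivity), zero_mul] at this
  exact (hK z hz0).trans
    (div_le_div_of_nonneg_left hC (by positivity) (pow_le_pow_left₀ hr.le hz n))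

theorem statement19_general (n d : ℕ) (CK : ℝ) :
    ∃ C : ℝ, 0 < C ∧
      ∀ ρ : ℝ, 1 ≤ ρ →
      ∀ K : EuclideanSpace ℝ (Fin d) → ℝ,
        (∀ x : EuclideanSpace ℝ (Fin d), x ≠ 0 → |K x| ≤ CK / ‖x‖ ^ n) →
      ∀ N₀ N : ℝ, 0 < N₀ → N₀ < N →
      ∀ ν : SignedMeasure (EuclideanSpace ℝ (Fin d)),
        ν.totalVariation (Metric.ball 0 N) = 0 →
      ∀ x : EuclideanSpace ℝ (Fin d), ‖x‖ ≤ N₀ →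
        shortVariation ρ (fun ε => Tnu K ν ε x)
          ≤ ENNReal.ofReal (C / (N - N₀) ^ n) * ν.totalVariation Set.univ := by
  refine ⟨2 * (|CK| + 1), by positivity, fun ρ hρ K hK N₀ N _ hN ν hν x hx => ?_⟩
  have hgap : 0 < N - N₀ := sub_pos.mpr hN
  set B := (|CK| + 1) / (N - N₀) ^ n
  have hKB : ∀ᵐ y ∂ν.totalVariation, |K (x - y)| ≤ B := by
    filter_upwards [measure_eq_zero_iff_ae_notMem.mp hν] with y hy
    have hy : N ≤ ‖y‖ := by simpa using hy
    have hxy : N - N₀ ≤ ‖x - y‖ := by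
      linarith [norm_sub_norm_le y x, norm_sub_rev y x]
    exact (abs_le_div_pow_of_le_norm hK hgap hxy).trans
      (div_le_div_of_nonneg_right (by linarith [le_abs_self CK]) (by positivity))
  have hconst : 2 * ENNReal.ofReal B = ENNReal.ofReal (2 * (|CK| + 1) / (N - N₀) ^ n) := by
    rw [← ENNReal.ofReal_ofNat 2, ← ENNReal.ofReal_mul zero_le_two, mul_div_assoc]
  refine shortVariation_le_of_tsum_le hρ fun ε hε _ => ?_
  rw [← hconst]
  exact tsum_ofReal_abs_sub_Tnu_le (by positivity) hKB hε

/-- For a kernel `K` with `|K(x)| ≤ C_K|x|^{-n}` and `ρ ≥ 1`, if `ν` is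
a finite real Radon measure with `supp ν ∩ B(0,N) = ∅` and `|x| ≤ N₀ < N`, then
`(V^S_ρ∘T)ν(x) ≤ C (N−N₀)^{−n} ‖ν‖` with `C` depending only on `n`, `d` and `C_K`. -/
theorem statement19 (n d : ℕ) (hn : 1 ≤ n) (hnd : n < d) (CK : ℝ) :
    ∃ C : ℝ, 0 < C ∧
      ∀ ρ : ℝ, 1 ≤ ρ →
      ∀ K : EuclideanSpace ℝ (Fin d) → ℝ,
        (∀ x : EuclideanSpace ℝ (Fin d), x ≠ 0 → |K x| ≤ CK / ‖x‖ ^ n) →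
      ∀ N₀ N : ℝ, 0 < N₀ → N₀ < N →
      ∀ ν : SignedMeasure (EuclideanSpace ℝ (Fin d)),
        ν.totalVariation (Metric.ball 0 N) = 0 →
      ∀ x : EuclideanSpace ℝ (Fin d), ‖x‖ ≤ N₀ →
        shortVariation ρ (fun ε => Tnu K ν ε x)
          ≤ ENNReal.ofReal (C / (N - N₀) ^ n) * ν.totalVariation Set.univ :=
  statement19_general n d CK
end
end
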